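/- arXiv:2007.14368 — 3 statements merged into one kernel-verified Lean document; each statement's English description precedes it below -/
import Mathlib

section
/- Let A, B be strings over an alphabet Σ with edit distance ED(A,B) ≤ k. Then A and B can each be partitioned into 2k+1 (possibly empty) contiguous intervals I₁^A,…,I_{2k+1}^A and I₁^B,…,I_{2k+1}^B, together with a partial monotone matching π between the interval indices, such that every unmatched interval has length at most 1, and for every matched pair (i, π(i)) the substring of B on interval I_{π(i)}^B equals the substring of A on interval I_i^A, where the starting positions of these two intervals differ by at most k. -/
open Finset

/-- Cost structure for edit distance (the former Mathlib `Levenshtein.Cost`). -/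
structure Levenshtein.Cost (α β δ : Type*) where
  delete : α → δ
  insert : β → δ
  substitute : α → β → δ

/-- Default unit costs (the former Mathlib `Levenshtein.defaultCost`). -/
def Levenshtein.defaultCost {α : Type*} [DecidableEq α] : Levenshtein.Cost α α ℕ where
  delete _ := 1
  insert _ := 1
  substitute a b := if a = b then 0 else 1

/-- Weighted Levenshtein distance (the former Mathlib `levenshtein`), by its recurrence. -/
def levenshtein {α β δ : Type*} [AddZeroClass δ] [Min δ] (C : Levenshtein.Cost α β δ) :
    List α → List β → δ
  | [], ys => (ys.map C.insert).foldr (· + ·) 0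
  | xs, [] => (xs.map C.delete).foldr (· + ·) 0
  | x :: xs, y :: ys =>
    min (C.delete x + levenshtein C xs (y :: ys))
      (min (C.insert y + levenshtein C (x :: xs) ys) (C.substitute x y + levenshtein C xs ys))

/-- Edit distance (Levenshtein distance with unit costs). -/
def ED {α : Type*} [DecidableEq α] (A B : List α) : ℕ :=
  levenshtein Levenshtein.defaultCost A B

/-!
An optimal edit script for `A` and `B` cuts both strings into blocks: each edit operation is a
block of length at most one on either side, and each maximal run of matched characters is a
common block. With at most `k` edits and no two copy blocks adjacent there are at most `2k + 1`
blocks, and before any block the two sides have drifted apart by at most the number of edits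
made so far.
-/

section EditDistance

variable {α : Type*} [DecidableEq α]

theorem ED_nil_left (B : List α) : ED [] B = B.length := by
  cases B <;> simp [ED, levenshtein, Levenshtein.defaultCost, ← List.sum_eq_foldr, add_comm]

theorem ED_nil_right (A : List α) : ED A [] = A.length := by
  cases A <;> simp [ED, levenshtein, Levenshtein.defaultCost, ← List.sum_eq_foldr, add_comm]

theorem ED_cons_cons (a b : α) (A B : List α) :
    ED (a :: A) (b :: B) =
      min (ED A (b :: B) + 1) (min (ED (a :: A) B + 1) (ED A B + if a = b then 0 else 1)) := by
  simp only [ED, levenshtein, Levenshtein.defaultCost, add_comm]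

end EditDistance

inductive AlignBlock (α : Type*)
  | copy (w : List α)
  | edit (a b : Option α)

namespace AlignBlock

variable {α : Type*}

def left : AlignBlock α → List α
  | copy w => w
  | edit a _ => a.toList

def right : AlignBlock α → List α
  | copy w => w
  | edit _ b => b.toList

def cost : AlignBlock α → ℕ
  | copy _ => 0
  | edit _ _ => 1

theorem abs_length_left_sub_length_right_le_cost (x : AlignBlock α) :
    |(x.left.length : ℤ) - x.right.length| ≤ x.cost := by
  cases x with
  | copy w => simp [left, right, cost]
  | edit a b =>
    have := a.length_toList_le
    have := b.length_toList_le
    simp only [left, right, cost, Nat.cast_one, abs_le]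
    omega

theorem abs_sum_length_left_sub_length_right_le {ι : Type*} (b : ι → AlignBlock α)
    (s : Finset ι) :
    |∑ t ∈ s, ((b t).left.length : ℤ) - ∑ t ∈ s, ((b t).right.length : ℤ)| ≤
      ∑ t ∈ s, (b t).cost := by
  rw [← Finset.sum_sub_distrib, Nat.cast_sum]
  exact (Finset.abs_sum_le_sum_abs _ s).trans
    (Finset.sum_le_sum fun t _ => abs_length_left_sub_length_right_le_cost (b t))

def consCopy (x : α) : List (AlignBlock α) → List (AlignBlock α)
  | [] => [copy [x]]
  | copy w :: l => copy (x :: w) :: l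
  | edit a b :: l => copy [x] :: edit a b :: l

end AlignBlock

open AlignBlock

section Alignment

variable {α : Type*}

def alignCost (l : List (AlignBlock α)) : ℕ :=
  (l.map cost).sum

/-- The chain condition says that no two copy blocks are adjacent. -/
structure IsAlignment (l : List (AlignBlock α)) (A B : List α) (c : ℕ) : Prop where
  flatMap_left : l.flatMap left = A
  flatMap_right : l.flatMap right = B
  alignCost_le : alignCost l ≤ c
  isChain : l.IsChain fun x y => 1 ≤ x.cost + y.cost

theorem length_le_of_isChain : ∀ l : List (AlignBlock α),
    l.IsChain (fun x y => 1 ≤ x.cost + y.cost) → l.length ≤ 2 * alignCost l + 1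
  | [], _ => by simp
  | [_], _ => by simp
  | x :: y :: l, h => by
    rw [List.isChain_cons_cons] at h
    have := length_le_of_isChain l h.2.tail
    simp only [alignCost, List.map_cons, List.sum_cons, List.length_cons] at this h ⊢
    omega

namespace IsAlignment

variable {l : List (AlignBlock α)} {A B : List α} {c : ℕ}

theorem nil : IsAlignment ([] : List (AlignBlock α)) [] [] 0 :=
  ⟨rfl, rfl, le_rfl, .nil⟩

theorem mono (h : IsAlignment l A B c) {c' : ℕ} (hc : c ≤ c') : IsAlignment l A B c' :=
  ⟨h.flatMap_left, h.flatMap_right, h.alignCost_le.trans hc, h.isChain⟩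

theorem cons_edit (h : IsAlignment l A B c) (a b : Option α) :
    IsAlignment (edit a b :: l) (a.toList ++ A) (b.toList ++ B) (c + 1) where
  flatMap_left := by simp [left, h.flatMap_left]
  flatMap_right := by simp [right, h.flatMap_right]
  alignCost_le := by
    simpa [alignCost, cost, add_comm] using h.alignCost_le
  isChain := List.isChain_cons.2 ⟨fun y _ => by simp [cost], h.isChain⟩

theorem consCopy (h : IsAlignment l A B c) (x : α) :
    IsAlignment (AlignBlock.consCopy x l) (x :: A) (x :: B) c := by
  obtain ⟨hA, hB, hc, hl⟩ := h
  subst hA hB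
  match l with
  | [] => exact ⟨rfl, rfl, hc, .singleton _⟩
  | copy w :: l =>
    refine ⟨by simp [AlignBlock.consCopy, left], by simp [AlignBlock.consCopy, right], ?_, ?_⟩
    · simpa [AlignBlock.consCopy, alignCost, cost] using hc
    · exact List.isChain_cons.2 ⟨fun y hy => (List.isChain_cons.1 hl).1 y hy, hl.tail⟩
  | edit a b :: l =>
    refine ⟨by simp [AlignBlock.consCopy, left], by simp [AlignBlock.consCopy, right], ?_, ?_⟩
    · simpa [AlignBlock.consCopy, alignCost, cost] using hc
    · exact List.isChain_cons_cons.2 ⟨by simp [cost], hl⟩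

theorem length_le (h : IsAlignment l A B c) : l.length ≤ 2 * c + 1 :=
  (length_le_of_isChain l h.isChain).trans (by have := h.alignCost_le; omega)

theorem exists_fin (h : IsAlignment l A B c) {n : ℕ} (hn : 2 * c + 1 ≤ n) :
    ∃ b : Fin n → AlignBlock α, (List.ofFn fun i => (b i).left).flatten = A ∧
      (List.ofFn fun i => (b i).right).flatten = B ∧ ∑ i, (b i).cost ≤ c := by
  obtain ⟨l', hA, hB, hc, rfl⟩ : ∃ l' : List (AlignBlock α), l'.flatMap left = A ∧
      l'.flatMap right = B ∧ alignCost l' ≤ c ∧ l'.length = n :=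
    ⟨l ++ List.replicate (n - l.length) (copy []), by simp [h.flatMap_left, left],
      by simp [h.flatMap_right, right], by simpa [alignCost, cost] using h.alignCost_le,
      by have := h.length_le; simp; omega⟩
  refine ⟨l'.get, ?_, ?_, ?_⟩
  · simpa [List.flatMap_def] using hA
  · simpa [List.flatMap_def] using hB
  · simpa [← List.sum_ofFn, alignCost] using hc

end IsAlignment

theorem exists_isAlignment [DecidableEq α] (A B : List α) : ∃ l, IsAlignment l A B (ED A B) := by
  induction A generalizing B with
  | nil =>
    induction B with
    | nil => exact ⟨[], by simpa [ED_nil_left] using IsAlignment.nil⟩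
    | cons b B ih =>
      obtain ⟨l, hl⟩ := ih
      exact ⟨_, by simpa [ED_nil_left] using hl.cons_edit none (some b)⟩
  | cons a A ihA =>
    induction B with
    | nil =>
      obtain ⟨l, hl⟩ := ihA []
      exact ⟨_, by simpa [ED_nil_right] using hl.cons_edit (some a) none⟩
    | cons b B ihB =>
      rw [ED_cons_cons]
      rcases min_choice (ED A (b :: B) + 1) (min (ED (a :: A) B + 1)
        (ED A B + if a = b then 0 else 1)) with hmin | hmin <;> rw [hmin]
      · obtain ⟨l, hl⟩ := ihA (b :: B)
        exact ⟨_, by simpa using hl.cons_edit (some a) none⟩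
      rcases min_choice (ED (a :: A) B + 1) (ED A B + if a = b then 0 else 1) with hmin | hmin <;>
        rw [hmin]
      · obtain ⟨l, hl⟩ := ihB
        exact ⟨_, by simpa using hl.cons_edit none (some b)⟩
      obtain ⟨l, hl⟩ := ihA B
      by_cases hab : a = b
      · subst hab
        exact ⟨_, by simpa using hl.consCopy a⟩
      · exact ⟨_, by simpa [hab] using hl.cons_edit (some a) (some b)⟩

end Alignment

theorem List.take_drop_flatten_ofFn {α : Type*} {n : ℕ} (f : Fin n → List α) (i : Fin n) :
    ((List.ofFn f).flatten.drop (∑ t ∈ univ.filter (· < i), (f t).length)).take (f i).length =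
      f i := by
  have hstart : ∑ t ∈ univ.filter (· < i), (f t).length =
      (((List.ofFn f).map List.length).take i).sum := by
    rw [List.map_ofFn, List.sum_take_ofFn]
    rfl
  rw [hstart, List.drop_sum_flatten, List.drop_eq_getElem_cons (by simp), List.flatten_cons,
    List.getElem_ofFn, List.take_left']
  rfl

section CopyIndex

variable {α : Type*} {n : ℕ} {b : Fin n → AlignBlock α} {i j : Fin n}

def copyIndex (b : Fin n → AlignBlock α) (i : Fin n) : Option (Fin n) :=
  match b i with
  | copy _ => some i
  | edit _ _ => none

theorem copyIndex_eq_some_iff : copyIndex b i = some j ↔ j = i ∧ ∃ w, b i = copy w := by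
  unfold copyIndex
  split <;> simp_all [eq_comm]

theorem copyIndex_eq_none_iff : copyIndex b i = none ↔ ∃ x y, b i = edit x y := by
  unfold copyIndex
  split <;> simp_all

end CopyIndex

/-- Structural decomposition lemma: if `ED(A,B) ≤ k` then `A` and `B` can each be
partitioned into `2k+1` contiguous intervals (given by their lengths `LA`, `LB`;
the `i`-th interval starts at the sum of the earlier lengths), together with a
partial monotone matching `π` such that unmatched intervals have length at most `1`,
and matched intervals carry equal substrings whose starting positions differ by at
most `k`. -/
theorem decomposition_lemma {α : Type*} [DecidableEq α] (k : ℕ) (A B : List α)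
    (h : ED A B ≤ k) :
    ∃ (LA LB : Fin (2 * k + 1) → ℕ) (π : Fin (2 * k + 1) → Option (Fin (2 * k + 1))),
      (∑ i, LA i) = A.length ∧ (∑ i, LB i) = B.length ∧
      -- the matching is monotone (order-preserving, hence injective)
      (∀ i i' j j', π i = some j → π i' = some j' → i < i' → j < j') ∧
      -- unmatched intervals of A have length at most 1
      (∀ i, π i = none → LA i ≤ 1) ∧
      -- unmatched intervals of B have length at most 1
      (∀ j, (∀ i, π i ≠ some j) → LB j ≤ 1) ∧
      -- matched intervals carry equal substrings, with starting positions within k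
      (∀ i j, π i = some j →
        LA i = LB j ∧
        |(∑ t ∈ univ.filter (· < i), LA t : ℤ) - (∑ t ∈ univ.filter (· < j), LB t : ℤ)| ≤ k ∧
        (A.drop (∑ t ∈ univ.filter (· < i), LA t)).take (LA i) =
          (B.drop (∑ t ∈ univ.filter (· < j), LB t)).take (LB j)) := by
  obtain ⟨l, hl⟩ := exists_isAlignment A B
  obtain ⟨b, hA, hB, hcost⟩ := (hl.mono h).exists_fin le_rfl
  refine ⟨fun i => (b i).left.length, fun i => (b i).right.length, copyIndex b,
    ?_, ?_, ?_, ?_, ?_, ?_⟩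
  · rw [← hA, List.length_flatten, List.map_ofFn, List.sum_ofFn]
    rfl
  · rw [← hB, List.length_flatten, List.map_ofFn, List.sum_ofFn]
    rfl
  · intro i i' j j' hj hj' hlt
    rwa [(copyIndex_eq_some_iff.1 hj).1, (copyIndex_eq_some_iff.1 hj').1]
  · intro i hi
    obtain ⟨x, y, hxy⟩ := copyIndex_eq_none_iff.1 hi
    simp [hxy, left, Option.length_toList_le]
  · intro j hj
    cases hbj : b j with
    | copy w => exact absurd (copyIndex_eq_some_iff.2 ⟨rfl, w, hbj⟩) (hj j)
    | edit x y => simp [hbj, right, Option.length_toList_le]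
  · intro i j hij
    obtain ⟨rfl, w, hw⟩ := copyIndex_eq_some_iff.1 hij
    refine ⟨by simp [hw, left, right], ?_, ?_⟩
    · calc _ ≤ ((∑ t ∈ univ.filter (· < j), (b t).cost : ℕ) : ℤ) :=
            abs_sum_length_left_sub_length_right_le b _
        _ ≤ k := by exact_mod_cast (sum_le_sum_of_subset (filter_subset _ _)).trans hcost
    · beta_reduce
      rw [← hA, ← hB, List.take_drop_flatten_ofFn (fun i => (b i).left),
        List.take_drop_flatten_ofFn (fun i => (b i).right), hw]
      rfl
end

section
/- Consider the GreedyMatch process on a string B of length n: a pointer i_B starts at 1, and at each step advances by max(d,1) where d is the length returned by an oracle. Suppose B admits a partition into 2k+1 contiguous intervals such that whenever i_B lies inside one of these intervals, the oracle returns at least the remaining length of that interval. Then after at most 2k+1 steps the pointer exceeds n. -/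
/-- Completeness of GreedyMatch (approximately correct oracle): the pointer `p`
starts at position `0` (0-indexed) and advances by `max (d t) 1` at step `t`, where
`d t` is the oracle's answer.  If `[0,n)` is partitioned into `2k+1` contiguous
intervals (with lengths given by the list `L`; the `i`-th interval spans
`[(L.take i).sum, (L.take (i+1)).sum)`) and whenever the pointer lies inside an
interval the oracle returns at least the remaining length of that interval, then after
at most `2k+1` steps the pointer passes the end of `B`. -/
theorem greedy_completeness (n k : ℕ) (L : List ℕ)
    (hL : L.length = 2 * k + 1) (hsum : L.sum = n)
    (p d : ℕ → ℕ) (hp0 : p 0 = 0)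
    (hstep : ∀ t, p (t + 1) = p t + max (d t) 1)
    (horacle : ∀ t, ∀ i < L.length,
      (L.take i).sum ≤ p t → p t < (L.take (i + 1)).sum →
      (L.take (i + 1)).sum ≤ p t + d t) :
    n ≤ p (2 * k + 1) := by
  have key : ∀ t, t ≤ L.length → (L.take t).sum ≤ p t := by
    intro t
    induction t with
    | zero => simp [hp0]
    | succ t ih =>
      intro ht
      have h1 := ih (Nat.le_of_succ_le ht)
      by_cases h : p t < (L.take (t + 1)).sum
      · have h2 := horacle t t (by omega) h1 h
        have := hstep t
        have : p t + d t ≤ p (t + 1) := by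
          rw [hstep t]; exact Nat.add_le_add_left (le_max_left _ _) _
        omega
      · push_neg at h
        have := hstep t
        have hm : 1 ≤ max (d t) 1 := le_max_right _ _
        omega
  have := key L.length le_rfl
  rw [List.take_length, hL] at this
  omega
end

section
/- Consider the GreedyMatch process on a string B of length n where B admits a partition into 2k'+1 contiguous intervals such that whenever the pointer i_B lies inside an interval, the oracle returns strictly more than half of the remaining length of that interval (or the interval has length ≤ 1 and the pointer advances by at least 1). Then the pointer exceeds n after at most (2k'+1)·⌈log₂ n⌉ steps. -/
/-- Completeness of GreedyMatch with a half approximately correct oracle: the pointer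
`p` starts at position `0` (0-indexed) and advances by `max (d t) 1` at step `t`.  If
`[0,n)` is partitioned into `2k'+1` contiguous intervals (with lengths given by the
list `L`) and whenever the pointer lies inside an interval of length more than `1` the
oracle returns strictly more than half of the remaining length of that interval
(intervals of length at most `1` are traversed by the default advance of `1`), then
the pointer passes the end of `B` after at most `(2k'+1)·⌈log₂ n⌉` steps. -/
theorem greedy_completeness_half (n k' : ℕ) (hn : 2 ≤ n) (L : List ℕ)
    (hL : L.length = 2 * k' + 1) (hsum : L.sum = n)
    (p d : ℕ → ℕ) (hp0 : p 0 = 0)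
    (hstep : ∀ t, p (t + 1) = p t + max (d t) 1)
    (horacle : ∀ t, ∀ i, ∀ hi : i < L.length,
      (L.take i).sum ≤ p t → p t < (L.take (i + 1)).sum → 1 < L[i] →
      (L.take (i + 1)).sum - p t < 2 * d t) :
    n ≤ p ((2 * k' + 1) * Nat.clog 2 n) := by
  set c := Nat.clog 2 n with hc
  have hc1 : 1 ≤ c := Nat.clog_pos (by norm_num) hn
  have hn2c : n ≤ 2 ^ c := Nat.le_pow_clog (by norm_num) n
  have h2c : 2 ≤ 2 ^ c := by
    calc 2 = 2 ^ 1 := rfl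
    _ ≤ 2 ^ c := Nat.pow_le_pow_right (by norm_num) hc1
  have hmono : ∀ t j, p t ≤ p (t + j) := by
    intro t j
    induction j with
    | zero => exact le_rfl
    | succ j ih =>
      have heq : p (t + (j + 1)) = p (t + j + 1) := rfl
      have := hstep (t + j)
      have h1 : 1 ≤ max (d (t + j)) 1 := le_max_right _ _
      omega
  have htake : ∀ i, (L.take i).sum ≤ n := by
    intro i
    rw [← hsum, ← List.take_append_drop i L, List.sum_append,
      List.take_append_drop]
    exact Nat.le_add_right _ _
  have key : ∀ i, i ≤ L.length → (L.take i).sum ≤ p (i * c) := by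
    intro i
    induction i with
    | zero => simp [hp0]
    | succ i ih =>
      intro hi
      have hi' : i < L.length := hi
      have hstart := ih (le_of_lt hi')
      set t := i * c with ht
      set S := (L.take (i + 1)).sum with hS
      have hSi : S = (L.take i).sum + L[i] := List.sum_take_succ L i hi'
      have inner : ∀ j, S ≤ p (t + j) ∨
          2 ^ j * (S - p (t + j) + 1) ≤ S - p t + 1 := by
        intro j
        induction j with
        | zero => right; simp
        | succ j ihj =>
          have heq : p (t + (j + 1)) = p (t + j + 1) := rfl
          rw [heq]
          rcases ihj with h | h
          · left
            exact h.trans (by have := hmono (t + j) 1; omega)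
          · by_cases hle : S ≤ p (t + j)
            · left
              exact hle.trans (by have := hmono (t + j) 1; omega)
            · push_neg at hle
              have hge : (L.take i).sum ≤ p (t + j) := hstart.trans (hmono t j)
              have hstep' := hstep (t + j)
              have hmax1 : 1 ≤ max (d (t + j)) 1 := le_max_right _ _
              by_cases hbig : 1 < L[i]
              · have horc := horacle (t + j) i hi' hge hle hbig
                have hmaxd : d (t + j) ≤ max (d (t + j)) 1 := le_max_left _ _
                right
                have hhalf : 2 * (S - p (t + j + 1) + 1) ≤ S - p (t + j) + 1 := by
                  omega
                calc 2 ^ (j + 1) * (S - p (t + j + 1) + 1)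
                    = 2 ^ j * (2 * (S - p (t + j + 1) + 1)) := by ring
                  _ ≤ 2 ^ j * (S - p (t + j) + 1) :=
                      Nat.mul_le_mul_left _ hhalf
                  _ ≤ S - p t + 1 := h
              · left
                -- interval has length ≤ 1, remaining is 1, one step suffices
                omega
      rcases inner c with h | h
      · have : (i + 1) * c = t + c := by ring
        rw [this]; exact h
      · -- derive contradiction unless S ≤ p (t + c)
        have hr0 : S - p t ≤ n := le_trans (Nat.sub_le _ _) (htake _)
        set r := S - p (t + c) with hr
        rcases Nat.eq_zero_or_pos r with h0 | hpos
        · have : (i + 1) * c = t + c := by ring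
          rw [this]
          have hge : (L.take i).sum ≤ p (t + c) := hstart.trans (hmono t c)
          omega
        · exfalso
          have h2 : 2 ^ c * 2 ≤ 2 ^ c * (r + 1) :=
            Nat.mul_le_mul_left _ (by omega)
          omega
  have := key L.length le_rfl
  rw [List.take_length, hsum, hL] at this
  exact this
end
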